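/- arXiv:1511.08895 — 2 statements merged into one kernel-verified Lean document; each statement's English description precedes it below -/
import Mathlib

section
/- Let x be a random vector in R^p with E[‖x‖₂³] < ∞, and let φ'' : R → R be Lipschitz continuous with constant L. Then for any β̂, β* ∈ R^p, ‖ E[xxᵀφ''(⟨x,β̂⟩)] − E[ xxᵀ ∫₀¹ φ''(⟨x, β* + ξ(β̂ − β*)⟩)dξ ] ‖₂ ≤ (L·E[‖x‖₂³]/2)·‖β̂ − β*‖₂. In particular, if x is supported on a ball of radius √K then the right-hand side is at most (L K^{3/2}/2)‖β̂ − β*‖₂, and if x is sub-gaussian with norm K then it is at most (L·6^{1.5}K³p^{1.5}/2)‖β̂ − β*‖₂. -/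
/-!
Entrywise, the difference of the two matrices is `E[x xᵀ g(x)]` with
`g(x) = φ''(⟨x, β̂⟩) - ∫₀¹ φ''(⟨x, β* + ξ(β̂ - β*)⟩) dξ`, and the Lipschitz bound on `φ''` gives
`|g(x)| ≤ L ∫₀¹ (1 - ξ) dξ · |⟨x, β̂ - β*⟩| ≤ (L/2) ‖β̂ - β*‖ ‖x‖`. Testing the matrix against unit
vectors `u, w` then bounds `|uᵀ E[x xᵀ g(x)] w| ≤ E[|⟨u, x⟩| |⟨w, x⟩| |g(x)|]` by
`(L/2) ‖β̂ - β*‖ E‖x‖³`. On a ball of radius `√K` one has `E‖x‖³ ≤ K^{3/2}`; in the sub-gaussian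
case `‖x‖³ ≤ √p ∑ᵢ |xᵢ|³` by two Cauchy–Schwarz steps, and `E|xᵢ|³ ≤ (K√3)³` is the moment bound
at `m = 3` in the direction `eᵢ`.
-/

open MeasureTheory Matrix
open scoped RealInnerProductSpace ENNReal

noncomputable section

/-- Spectral (`ℓ₂` operator) norm of a matrix. -/
def specNorm {p : ℕ} (A : Matrix (Fin p) (Fin p) ℝ) : ℝ :=
  ‖Matrix.toEuclideanCLM (𝕜 := ℝ) A‖

namespace LipschitzWith

variable {g : ℝ → ℝ} {K : NNReal}

lemma abs_sub_intervalIntegral_lineMap_le (hg : LipschitzWith K g) (a b : ℝ) :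
    |g b - ∫ ξ in (0:ℝ)..1, g (a + ξ * (b - a))| ≤ K / 2 * |b - a| := by
  have hcont : Continuous fun ξ : ℝ => g (a + ξ * (b - a)) := by
    have := hg.continuous; fun_prop
  have hpt : ∀ ξ ∈ Set.Ioc (0:ℝ) 1,
      ‖g b - g (a + ξ * (b - a))‖ ≤ K * ((1 - ξ) * |b - a|) := fun ξ hξ => by
    have h := hg.dist_le_mul b (a + ξ * (b - a))
    simp only [Real.dist_eq] at h
    rwa [show b - (a + ξ * (b - a)) = (1 - ξ) * (b - a) by ring, abs_mul,
      abs_of_nonneg (sub_nonneg.2 hξ.2)] at h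
  calc |g b - ∫ ξ in (0:ℝ)..1, g (a + ξ * (b - a))|
      = ‖∫ ξ in (0:ℝ)..1, (g b - g (a + ξ * (b - a)))‖ := by
        rw [intervalIntegral.integral_sub intervalIntegrable_const (hcont.intervalIntegrable 0 1)]
        simp
    _ ≤ ∫ ξ in (0:ℝ)..1, K * ((1 - ξ) * |b - a|) :=
        intervalIntegral.norm_integral_le_of_norm_le zero_le_one (ae_of_all _ hpt)
          ((by fun_prop : Continuous fun ξ : ℝ => (K : ℝ) * ((1 - ξ) * |b - a|)).intervalIntegrable
            0 1)
    _ = K / 2 * |b - a| := by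
        simp [intervalIntegral.integral_comp_sub_left fun x : ℝ => x]
        ring

variable {E : Type*} [NormedAddCommGroup E] [InnerProductSpace ℝ E]

lemma abs_comp_inner_le (hg : LipschitzWith K g) (v b : E) :
    |g ⟪v, b⟫| ≤ |g 0| + K * ‖b‖ * ‖v‖ := by
  have h := hg.dist_le_mul ⟪v, b⟫ 0
  simp only [Real.dist_eq, sub_zero] at h
  have hvb := abs_real_inner_le_norm v b
  have : (K : ℝ) * |⟪v, b⟫| ≤ K * (‖v‖ * ‖b‖) := by gcongr
  linarith [abs_sub_abs_le_abs_sub (g ⟪v, b⟫) (g 0)]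

lemma abs_comp_inner_sub_intervalIntegral_le (hg : LipschitzWith K g) (v b c : E) :
    |g ⟪v, b⟫ - ∫ ξ in (0:ℝ)..1, g ⟪v, c + ξ • (b - c)⟫| ≤ K / 2 * ‖b - c‖ * ‖v‖ := by
  have hline : ∀ ξ : ℝ, ⟪v, c + ξ • (b - c)⟫ = ⟪v, c⟫ + ξ * (⟪v, b⟫ - ⟪v, c⟫) := fun ξ => by
    rw [inner_add_right, real_inner_smul_right, inner_sub_right]
  simp_rw [hline]
  calc _ ≤ K / 2 * |⟪v, b⟫ - ⟪v, c⟫| := hg.abs_sub_intervalIntegral_lineMap_le _ _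
    _ ≤ K / 2 * (‖b - c‖ * ‖v‖) := by
        rw [← inner_sub_right, real_inner_comm]
        gcongr
        exact abs_real_inner_le_norm _ _
    _ = _ := by ring

end LipschitzWith

section WeightedSecondMoment

variable {ι : Type*} {μ : Measure (EuclideanSpace ℝ ι)}

def weightedSecondMoment (μ : Measure (EuclideanSpace ℝ ι)) (g : EuclideanSpace ℝ ι → ℝ) :
    Matrix ι ι ℝ :=
  Matrix.of fun i j => ∫ v, v i * v j * g v ∂μ

lemma weightedSecondMoment_sub {g h : EuclideanSpace ℝ ι → ℝ}
    (hg : ∀ i j, Integrable (fun v => v i * v j * g v) μ)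
    (hh : ∀ i j, Integrable (fun v => v i * v j * h v) μ) :
    weightedSecondMoment μ g - weightedSecondMoment μ h = weightedSecondMoment μ (g - h) := by
  ext i j
  simp only [weightedSecondMoment, Matrix.sub_apply, of_apply, Pi.sub_apply, mul_sub]
  exact (integral_sub (hg i j) (hh i j)).symm

variable [Fintype ι]

lemma integrable_apply_mul_apply_mul [IsFiniteMeasure μ] (hmom : Integrable (fun v => ‖v‖ ^ 3) μ)
    {g : EuclideanSpace ℝ ι → ℝ} (hg : AEStronglyMeasurable g μ) {a b : ℝ}
    (hgrowth : ∀ v, |g v| ≤ a + b * ‖v‖) (i j : ι) :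
    Integrable (fun v => v i * v j * g v) μ := by
  refine (((integrable_const 1).add hmom).const_mul |a| |>.add (hmom.const_mul |b|)).mono'
    (((PiLp.continuous_apply 2 _ i).mul (PiLp.continuous_apply 2 _ j)).aestronglyMeasurable.mul hg)
    (ae_of_all _ fun v => ?_)
  have hi := PiLp.norm_apply_le v i
  have hj := PiLp.norm_apply_le v j
  have hsq : ‖v‖ ^ 2 ≤ 1 + ‖v‖ ^ 3 := by
    nlinarith [mul_nonneg (norm_nonneg v) (sq_nonneg (‖v‖ - 1)), sq_nonneg (2 * ‖v‖ - 1)]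
  have hg' : |g v| ≤ |a| + |b| * ‖v‖ :=
    (hgrowth v).trans (by gcongr; exacts [le_abs_self a, le_abs_self b])
  simp only [Pi.add_apply, norm_mul, Real.norm_eq_abs] at hi hj ⊢
  calc |v i| * |v j| * |g v| ≤ ‖v‖ * ‖v‖ * (|a| + |b| * ‖v‖) := by gcongr
    _ ≤ |a| * (1 + ‖v‖ ^ 3) + |b| * ‖v‖ ^ 3 := by
        nlinarith [mul_le_mul_of_nonneg_left hsq (abs_nonneg a), abs_nonneg b]

lemma dotProduct_weightedSecondMoment_mulVec {g : EuclideanSpace ℝ ι → ℝ}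
    (hg : ∀ i j, Integrable (fun v => v i * v j * g v) μ) (x y : EuclideanSpace ℝ ι) :
    x ⬝ᵥ weightedSecondMoment μ g *ᵥ y = ∫ v, ⟪x, v⟫ * ⟪y, v⟫ * g v ∂μ := by
  have hxy : ∀ v : EuclideanSpace ℝ ι,
      ⟪x, v⟫ * ⟪y, v⟫ * g v = ∑ i, ∑ j, x i * y j * (v i * v j * g v) := fun v => by
    simp only [PiLp.inner_apply, RCLike.inner_apply, conj_trivial, Finset.sum_mul, Finset.mul_sum]
    rw [Finset.sum_comm]
    exact Finset.sum_congr rfl fun i _ => Finset.sum_congr rfl fun j _ => by ring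
  simp only [hxy, dotProduct, mulVec, weightedSecondMoment, of_apply, Finset.mul_sum]
  rw [integral_finsetSum _ fun i _ => integrable_finsetSum _ fun j _ => (hg i j).const_mul _]
  refine Finset.sum_congr rfl fun i _ => ?_
  rw [integral_finsetSum _ fun j _ => (hg i j).const_mul _]
  refine Finset.sum_congr rfl fun j _ => ?_
  rw [integral_const_mul]
  ring

lemma specNorm_weightedSecondMoment_le {p : ℕ} {μ : Measure (EuclideanSpace ℝ (Fin p))}
    [IsFiniteMeasure μ] (hmom : Integrable (fun v => ‖v‖ ^ 3) μ)
    {g : EuclideanSpace ℝ (Fin p) → ℝ} (hg : AEStronglyMeasurable g μ) {C : ℝ} (hC : 0 ≤ C)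
    (hgC : ∀ v, |g v| ≤ C * ‖v‖) :
    specNorm (weightedSecondMoment μ g) ≤ C * ∫ v, ‖v‖ ^ 3 ∂μ := by
  have hint := integrable_apply_mul_apply_mul hmom hg (a := 0) (by simpa using hgC)
  refine ContinuousLinearMap.opNorm_le_of_re_inner_le
    (mul_nonneg hC (integral_nonneg fun v => by positivity)) fun x y hx hy => ?_
  rw [RCLike.re_to_real, real_inner_comm, inner_toEuclideanCLM,
    dotProduct_weightedSecondMoment_mulVec hint, ← integral_const_mul]
  refine (le_abs_self _).trans (abs_integral_le_integral_abs.trans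
    (integral_mono_of_nonneg (ae_of_all _ fun v => abs_nonneg _) (hmom.const_mul C)
      (ae_of_all _ fun v => ?_)))
  have hyv := abs_real_inner_le_norm y v
  have hxv := abs_real_inner_le_norm x v
  rw [hx, one_mul] at hxv
  rw [hy, one_mul] at hyv
  simp only [abs_mul]
  calc |⟪y, v⟫| * |⟪x, v⟫| * |g v| ≤ ‖v‖ * ‖v‖ * (C * ‖v‖) := by gcongr; exact hgC v
    _ = C * ‖v‖ ^ 3 := by ring

lemma specNorm_weightedSecondMoment_comp_inner_sub_intervalIntegral_le {p : ℕ}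
    {μ : Measure (EuclideanSpace ℝ (Fin p))} [IsFiniteMeasure μ]
    (hmom : Integrable (fun v => ‖v‖ ^ 3) μ) {g : ℝ → ℝ} {K : NNReal} (hg : LipschitzWith K g)
    (b c : EuclideanSpace ℝ (Fin p)) :
    specNorm (weightedSecondMoment μ (fun v => g ⟪v, b⟫) -
        weightedSecondMoment μ (fun v => ∫ ξ in (0:ℝ)..1, g ⟪v, c + ξ • (b - c)⟫)) ≤
      K / 2 * ‖b - c‖ * ∫ v, ‖v‖ ^ 3 ∂μ := by
  set avg : EuclideanSpace ℝ (Fin p) → ℝ := fun v => ∫ ξ in (0:ℝ)..1, g ⟪v, c + ξ • (b - c)⟫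
  have hg_cont := hg.continuous
  have hcont : Continuous fun v : EuclideanSpace ℝ (Fin p) => g ⟪v, b⟫ := by fun_prop
  have hcont_avg : Continuous avg :=
    intervalIntegral.continuous_parametric_intervalIntegral_of_continuous' (by fun_prop) 0 1
  have hgap : ∀ v, |g ⟪v, b⟫ - avg v| ≤ K / 2 * ‖b - c‖ * ‖v‖ := fun v =>
    hg.abs_comp_inner_sub_intervalIntegral_le v b c
  have hint := integrable_apply_mul_apply_mul hmom hcont.aestronglyMeasurable
    fun v => hg.abs_comp_inner_le v b
  have hint_gap := integrable_apply_mul_apply_mul hmom (hcont.sub hcont_avg).aestronglyMeasurable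
    (a := 0) (by simpa using hgap)
  have hint_avg : ∀ i j, Integrable (fun v => v i * v j * avg v) μ := fun i j =>
    ((hint i j).sub (hint_gap i j)).congr (ae_of_all _ fun v => by simp only [Pi.sub_apply]; ring)
  rw [weightedSecondMoment_sub hint hint_avg]
  exact specNorm_weightedSecondMoment_le hmom (hcont.sub hcont_avg).aestronglyMeasurable
    (by positivity) hgap

end WeightedSecondMoment

lemma Real.sqrt_pow_three {x : ℝ} (hx : 0 ≤ x) : √x ^ 3 = x ^ (3 / 2 : ℝ) := by
  rw [Real.sqrt_eq_rpow, ← Real.rpow_mul_natCast hx]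
  norm_num

lemma Real.sqrt_mul_self_eq_rpow {x : ℝ} (hx : 0 ≤ x) : √x * x = x ^ (1.5 : ℝ) := by
  rw [show (1.5 : ℝ) = 3 / 2 by norm_num, ← Real.sqrt_pow_three hx, pow_succ, Real.sq_sqrt hx]
  ring

lemma integral_norm_pow_le_of_ae_norm_le {E : Type*} [NormedAddCommGroup E] [MeasurableSpace E]
    {μ : Measure E} [IsProbabilityMeasure μ] (n : ℕ) {R : ℝ} (h : ∀ᵐ v ∂μ, ‖v‖ ≤ R) :
    ∫ v, ‖v‖ ^ n ∂μ ≤ R ^ n := by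
  calc ∫ v, ‖v‖ ^ n ∂μ ≤ ∫ _, R ^ n ∂μ :=
        integral_mono_of_nonneg (ae_of_all _ fun v => by positivity) (integrable_const _)
          (h.mono fun v hv => pow_le_pow_left₀ (norm_nonneg v) hv n)
    _ = R ^ n := by simp

section Coordinates

variable {ι : Type*} [Fintype ι]

lemma EuclideanSpace.norm_pow_three_le_sqrt_card_mul_sum (v : EuclideanSpace ℝ ι) :
    ‖v‖ ^ 3 ≤ √(Fintype.card ι) * ∑ i, |v i| ^ 3 := by
  have hsq : ‖v‖ ^ 2 = ∑ i, |v i| ^ 2 := by simp [EuclideanSpace.real_norm_sq_eq]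
  have hsum_abs_le : ∑ i, |v i| ≤ √(Fintype.card ι) * ‖v‖ := by
    refine (pow_le_pow_iff_left₀ (by positivity) (by positivity) two_ne_zero).1 ?_
    rw [mul_pow, Real.sq_sqrt (Nat.cast_nonneg _), hsq]
    exact sq_sum_le_card_mul_sum_sq
  have hcs : (‖v‖ ^ 2) ^ 2 ≤ (∑ i, |v i|) * ∑ i, |v i| ^ 3 := by
    rw [hsq]
    exact Finset.sum_sq_le_sum_mul_sum_of_sq_le_mul _ (fun i _ => abs_nonneg _)
      (fun i _ => by positivity) fun i _ => (by ring : _ = _).le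
  rcases (norm_nonneg v).eq_or_lt with h0 | hpos
  · rw [← h0, zero_pow three_ne_zero]; positivity
  · refine le_of_mul_le_mul_right ?_ hpos
    calc ‖v‖ ^ 3 * ‖v‖ = (‖v‖ ^ 2) ^ 2 := by ring
      _ ≤ √(Fintype.card ι) * ‖v‖ * ∑ i, |v i| ^ 3 := hcs.trans (by gcongr)
      _ = _ := by ring

variable {μ : Measure (EuclideanSpace ℝ ι)}

lemma integral_norm_pow_three_le_of_integral_abs_apply_pow_three_le
    (hmom : Integrable (fun v => ‖v‖ ^ 3) μ) {M : ℝ} (hM : ∀ i, ∫ v, |v i| ^ 3 ∂μ ≤ M) :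
    ∫ v, ‖v‖ ^ 3 ∂μ ≤ √(Fintype.card ι) * Fintype.card ι * M := by
  have hint : ∀ i, Integrable (fun v : EuclideanSpace ℝ ι => |v i| ^ 3) μ := fun i =>
    hmom.mono' ((PiLp.continuous_apply 2 _ i).abs.pow 3).aestronglyMeasurable
      (ae_of_all _ fun v => by
        simpa [abs_pow] using pow_le_pow_left₀ (abs_nonneg _) (PiLp.norm_apply_le v i) 3)
  calc ∫ v, ‖v‖ ^ 3 ∂μ ≤ ∫ v, √(Fintype.card ι) * ∑ i, |v i| ^ 3 ∂μ :=
        integral_mono hmom ((integrable_finsetSum _ fun i _ => hint i).const_mul _)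
          EuclideanSpace.norm_pow_three_le_sqrt_card_mul_sum
    _ = √(Fintype.card ι) * ∑ i, ∫ v, |v i| ^ 3 ∂μ := by
        rw [integral_const_mul, integral_finsetSum _ fun i _ => hint i]
    _ ≤ √(Fintype.card ι) * ∑ _i : ι, M := by gcongr with i; exact hM i
    _ = _ := by simp [mul_assoc]

end Coordinates

lemma integral_norm_pow_three_le_of_directional_moment_le {p : ℕ}
    {μ : Measure (EuclideanSpace ℝ (Fin p))} (hmom : Integrable (fun v => ‖v‖ ^ 3) μ)
    {K : ℝ} (hK : 0 ≤ K)
    (hdir : ∀ w : EuclideanSpace ℝ (Fin p), ‖w‖ = 1 →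
      (∫ v, |⟪v, w⟫| ^ 3 ∂μ) ^ (3 : ℝ)⁻¹ ≤ K * √3) :
    ∫ v, ‖v‖ ^ 3 ∂μ ≤ (6 : ℝ) ^ (1.5 : ℝ) * K ^ 3 * (p : ℝ) ^ (1.5 : ℝ) := by
  have hcoord : ∀ i, ∫ v, |v i| ^ 3 ∂μ ≤ (K * √3) ^ 3 := fun i => by
    have h := hdir (EuclideanSpace.single i 1) (by simp)
    simp only [EuclideanSpace.inner_single_right, one_mul, conj_trivial] at h
    rw [Real.rpow_inv_le_iff_of_pos (integral_nonneg fun v => by positivity) (by positivity)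
      (by norm_num)] at h
    exact_mod_cast h
  have h3 : (3 : ℝ) ^ (1.5 : ℝ) ≤ (6 : ℝ) ^ (1.5 : ℝ) :=
    Real.rpow_le_rpow (by norm_num) (by norm_num) (by norm_num)
  calc ∫ v, ‖v‖ ^ 3 ∂μ ≤ √(p : ℝ) * p * (K * √3) ^ 3 := by
        simpa using integral_norm_pow_three_le_of_integral_abs_apply_pow_three_le hmom hcoord
    _ = (√3 * 3) * K ^ 3 * (√(p : ℝ) * p) := by
        linear_combination (K ^ 3 * √(p : ℝ) * p * √3) * Real.sq_sqrt (zero_le_three (α := ℝ))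
    _ = (3 : ℝ) ^ (1.5 : ℝ) * K ^ 3 * (p : ℝ) ^ (1.5 : ℝ) := by
        rw [Real.sqrt_mul_self_eq_rpow zero_le_three, Real.sqrt_mul_self_eq_rpow (Nat.cast_nonneg p)]
    _ ≤ _ := by gcongr

theorem averaged_hessian_lipschitz_bound_general (p : ℕ)
    (μ : Measure (EuclideanSpace ℝ (Fin p))) [IsProbabilityMeasure μ]
    (φ : ℝ → ℝ) (L : ℝ) (hL : 0 < L)
    (hlip : LipschitzWith (Real.toNNReal L) (iteratedDeriv 2 φ))
    (hmom : Integrable (fun v => ‖v‖ ^ 3) μ) :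
    ∀ βh βs : EuclideanSpace ℝ (Fin p),
      specNorm
          ((Matrix.of fun i j => ∫ v, v i * v j * iteratedDeriv 2 φ ⟪v, βh⟫ ∂μ) -
            (Matrix.of fun i j => ∫ v, v i * v j *
              (∫ ξ in (0:ℝ)..1, iteratedDeriv 2 φ ⟪v, βs + ξ • (βh - βs)⟫) ∂μ)) ≤
        L * (∫ v, ‖v‖ ^ 3 ∂μ) / 2 * ‖βh - βs‖ ∧
      (∀ K : ℝ, 0 < K → (∀ᵐ v ∂μ, ‖v‖ ≤ Real.sqrt K) →
        L * (∫ v, ‖v‖ ^ 3 ∂μ) / 2 * ‖βh - βs‖ ≤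
          L * K ^ ((3:ℝ)/2) / 2 * ‖βh - βs‖) ∧
      (∀ K : ℝ, 0 < K →
        (∀ w : EuclideanSpace ℝ (Fin p), ‖w‖ = 1 →
          ∀ m : ℕ, 1 ≤ m →
            (∫ v, |⟪v, w⟫| ^ m ∂μ) ^ ((m : ℝ)⁻¹) ≤ K * Real.sqrt m) →
        L * (∫ v, ‖v‖ ^ 3 ∂μ) / 2 * ‖βh - βs‖ ≤
          L * (6 : ℝ) ^ ((1.5 : ℝ)) * K ^ 3 * (p : ℝ) ^ ((1.5 : ℝ)) / 2 *
            ‖βh - βs‖) := by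
  intro βh βs
  refine ⟨?_, fun K hK hball => ?_, fun K hK hsub => ?_⟩
  · have h := specNorm_weightedSecondMoment_comp_inner_sub_intervalIntegral_le hmom hlip βh βs
    rw [Real.coe_toNNReal _ hL.le] at h
    calc _ ≤ _ := h
      _ = _ := by ring
  · rw [← Real.sqrt_pow_three hK.le]
    gcongr
    exact integral_norm_pow_le_of_ae_norm_le 3 hball
  · have h := integral_norm_pow_three_le_of_directional_moment_le hmom hK.le fun w hw => by
      simpa using hsub w hw 3 (by norm_num)
    calc L * (∫ v, ‖v‖ ^ 3 ∂μ) / 2 * ‖βh - βs‖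
        ≤ L * ((6 : ℝ) ^ (1.5 : ℝ) * K ^ 3 * (p : ℝ) ^ (1.5 : ℝ)) / 2 * ‖βh - βs‖ := by gcongr
      _ = _ := by ring

/-- **Lemma (smoothness of the averaged Hessian).** If `x` (law `μ`) has
`E[‖x‖₂³] < ∞` and `φ''` is `L`-Lipschitz, then for any `β̂, β*`,
`‖E[xxᵀφ''(⟨x,β̂⟩)] − E[xxᵀ∫₀¹φ''(⟨x, β*+ξ(β̂−β*)⟩)dξ]‖₂ ≤ (L·E[‖x‖₂³]/2)‖β̂−β*‖₂`;
in particular the right-hand side is at most `(LK^{3/2}/2)‖β̂−β*‖₂` when `x` is supported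
on a ball of radius `√K`, and at most `(L·6^{1.5}K³p^{1.5}/2)‖β̂−β*‖₂` when `x` is
sub-gaussian with norm `K`. -/
theorem averaged_hessian_lipschitz_bound (p : ℕ)
    (μ : Measure (EuclideanSpace ℝ (Fin p))) [IsProbabilityMeasure μ]
    (φ : ℝ → ℝ) (hφ : ContDiff ℝ 2 φ) (L : ℝ) (hL : 0 < L)
    (hlip : LipschitzWith (Real.toNNReal L) (iteratedDeriv 2 φ))
    (hmom : Integrable (fun v => ‖v‖ ^ 3) μ) :
    ∀ βh βs : EuclideanSpace ℝ (Fin p),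
      specNorm
          ((Matrix.of fun i j => ∫ v, v i * v j * iteratedDeriv 2 φ ⟪v, βh⟫ ∂μ) -
            (Matrix.of fun i j => ∫ v, v i * v j *
              (∫ ξ in (0:ℝ)..1, iteratedDeriv 2 φ ⟪v, βs + ξ • (βh - βs)⟫) ∂μ)) ≤
        L * (∫ v, ‖v‖ ^ 3 ∂μ) / 2 * ‖βh - βs‖ ∧
      (∀ K : ℝ, 0 < K → (∀ᵐ v ∂μ, ‖v‖ ≤ Real.sqrt K) →
        L * (∫ v, ‖v‖ ^ 3 ∂μ) / 2 * ‖βh - βs‖ ≤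
          L * K ^ ((3:ℝ)/2) / 2 * ‖βh - βs‖) ∧
      (∀ K : ℝ, 0 < K →
        (∀ w : EuclideanSpace ℝ (Fin p), ‖w‖ = 1 →
          ∀ m : ℕ, 1 ≤ m →
            (∫ v, |⟪v, w⟫| ^ m ∂μ) ^ ((m : ℝ)⁻¹) ≤ K * Real.sqrt m) →
        L * (∫ v, ‖v‖ ^ 3 ∂μ) / 2 * ‖βh - βs‖ ≤
          L * (6 : ℝ) ^ ((1.5 : ℝ)) * K ^ 3 * (p : ℝ) ^ ((1.5 : ℝ)) / 2 *
            ‖βh - βs‖) :=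
  averaged_hessian_lipschitz_bound_general p μ φ L hL hlip hmom

end
end

section
/- For all positive constants c₁ and c₂, ∫_{c₁}^∞ e^{−c₂ t^{2/3}} dt ≤ ( 3c₁^{1/3}/(2c₂) + 3/(4c₂² c₁^{1/3}) ) · e^{−c₂ c₁^{2/3}}. -/
/-!
The bound is `F(c₁)` for the explicit function
`F(t) = (3/(2c₂) t^{1/3} + 3/(4c₂²) t^{-1/3}) e^{-c₂ t^{2/3}}`, which vanishes at infinity
and satisfies `-F'(t) = (1 + t^{-4/3}/(4c₂²)) e^{-c₂ t^{2/3}}`, a function dominating the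
integrand.
-/

open MeasureTheory Filter Set Topology Real

noncomputable section

theorem setIntegral_Ioi_le_of_hasDerivAt_neg {f g G : ℝ → ℝ} {a : ℝ}
    (hG : ∀ x ∈ Ici a, HasDerivAt G (-g x) x) (hG_top : Tendsto G atTop (𝓝 0))
    (hf : AEStronglyMeasurable f (volume.restrict (Ioi a)))
    (hfg : ∀ x ∈ Ioi a, ‖f x‖ ≤ g x) :
    ∫ x in Ioi a, f x ≤ G a := by
  have hG' : ∀ x ∈ Ici a, HasDerivAt (-G) (g x) x := fun x hx =>
    (hG x hx).neg.congr_deriv (neg_neg _)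
  have hG_top' : Tendsto (-G) atTop (𝓝 0) := by
    rw [← neg_zero]
    exact hG_top.neg
  have hg_nonneg : ∀ x ∈ Ioi a, 0 ≤ g x := fun x hx => (norm_nonneg _).trans (hfg x hx)
  have hg_int : IntegrableOn g (Ioi a) :=
    integrableOn_Ioi_deriv_of_nonneg' hG' hg_nonneg hG_top'
  have hf_int : IntegrableOn f (Ioi a) :=
    hg_int.mono' hf ((ae_restrict_mem measurableSet_Ioi).mono hfg)
  calc ∫ x in Ioi a, f x ≤ ∫ x in Ioi a, g x :=
        setIntegral_mono_on hf_int hg_int measurableSet_Ioi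
          fun x hx => (le_norm_self _).trans (hfg x hx)
    _ = G a := by
        rw [integral_Ioi_of_hasDerivAt_of_nonneg' hG' hg_nonneg hG_top', Pi.neg_apply,
          sub_neg_eq_add, zero_add]

theorem tendsto_rpow_mul_exp_neg_mul_rpow_atTop_nhds_zero (p : ℝ) {b q : ℝ} (hb : 0 < b)
    (hq : 0 < q) : Tendsto (fun t : ℝ => t ^ p * exp (-(b * t ^ q))) atTop (𝓝 0) := by
  refine ((tendsto_rpow_mul_exp_neg_mul_atTop_nhds_zero (p / q) b hb).comp
    (tendsto_rpow_atTop hq)).congr' ?_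
  filter_upwards [eventually_ge_atTop 0] with t ht
  rw [Function.comp_apply, ← rpow_mul ht, mul_div_cancel₀ p hq.ne', neg_mul]

def expRpowTailMajorant (c t : ℝ) : ℝ :=
  (3 / (2 * c) * t ^ (1 / 3 : ℝ) + 3 / (4 * c ^ 2) * t ^ (-(1 / 3) : ℝ)) *
    exp (-(c * t ^ (2 / 3 : ℝ)))

theorem tendsto_expRpowTailMajorant {c : ℝ} (hc : 0 < c) :
    Tendsto (expRpowTailMajorant c) atTop (𝓝 0) := by
  have h := ((tendsto_rpow_mul_exp_neg_mul_rpow_atTop_nhds_zero (1 / 3) hc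
    (by norm_num : (0 : ℝ) < 2 / 3)).const_mul (3 / (2 * c))).add
    ((tendsto_rpow_mul_exp_neg_mul_rpow_atTop_nhds_zero (-(1 / 3)) hc
    (by norm_num : (0 : ℝ) < 2 / 3)).const_mul (3 / (4 * c ^ 2)))
  rw [mul_zero, mul_zero, add_zero] at h
  exact h.congr fun t => by simp only [expRpowTailMajorant]; ring

theorem hasDerivAt_expRpowTailMajorant {c t : ℝ} (hc : c ≠ 0) (ht : 0 < t) :
    HasDerivAt (expRpowTailMajorant c)
      (-((1 + t ^ (-(4 / 3) : ℝ) / (4 * c ^ 2)) * exp (-(c * t ^ (2 / 3 : ℝ))))) t := by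
  have hpow (r : ℝ) : HasDerivAt (fun x : ℝ => x ^ r) (r * t ^ (r - 1)) t :=
    hasDerivAt_rpow_const (Or.inl ht.ne')
  have hexp := ((hpow (2 / 3)).const_mul c).neg.exp
  have h := (((hpow (1 / 3)).const_mul (3 / (2 * c))).add
    ((hpow (-(1 / 3))).const_mul (3 / (4 * c ^ 2)))).mul hexp
  refine h.congr_deriv ?_
  have key (e : ℝ) (k : ℤ) (he : e = 1 / 3 * k) : t ^ e = (t ^ (1 / 3 : ℝ)) ^ k := by
    rw [he, rpow_mul_intCast ht.le]
  simp only [Pi.add_apply, Pi.neg_apply]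
  rw [key (1 / 3 - 1) (-2) (by norm_num), key (-(1 / 3) - 1) (-4) (by norm_num),
    key (2 / 3 - 1) (-1) (by norm_num), key (-(1 / 3)) (-1) (by norm_num),
    key (2 / 3) 2 (by norm_num), key (-(4 / 3)) (-4) (by norm_num)]
  have hs : 0 < t ^ (1 / 3 : ℝ) := rpow_pos_of_pos ht _
  generalize t ^ (1 / 3 : ℝ) = s at hs ⊢
  field_simp
  ring

/-- For all positive constants `c₁, c₂`,
`∫_{c₁}^∞ e^{−c₂ t^{2/3}} dt ≤ (3c₁^{1/3}/(2c₂) + 3/(4c₂²c₁^{1/3})) · e^{−c₂ c₁^{2/3}}`. -/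
theorem integral_exp_rpow_tail_bound (c₁ c₂ : ℝ) (h₁ : 0 < c₁) (h₂ : 0 < c₂) :
    ∫ t in Set.Ioi c₁, Real.exp (-(c₂ * t ^ ((2:ℝ)/3))) ≤
      (3 * c₁ ^ ((1:ℝ)/3) / (2 * c₂) + 3 / (4 * c₂ ^ 2 * c₁ ^ ((1:ℝ)/3))) *
        Real.exp (-(c₂ * c₁ ^ ((2:ℝ)/3))) := by
  have hderiv (t : ℝ) (ht : t ∈ Ici c₁) :=
    hasDerivAt_expRpowTailMajorant h₂.ne' (h₁.trans_le ht)
  have hdom (t : ℝ) (ht : t ∈ Ioi c₁) : ‖exp (-(c₂ * t ^ ((2:ℝ)/3)))‖ ≤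
      (1 + t ^ (-(4 / 3) : ℝ) / (4 * c₂ ^ 2)) * exp (-(c₂ * t ^ (2 / 3 : ℝ))) := by
    have : 0 ≤ t ^ (-(4 / 3) : ℝ) := rpow_nonneg (h₁.trans ht).le _
    rw [norm_of_nonneg (exp_pos _).le]
    exact le_mul_of_one_le_left (exp_pos _).le (le_add_of_nonneg_right (by positivity))
  refine (setIntegral_Ioi_le_of_hasDerivAt_neg hderiv (tendsto_expRpowTailMajorant h₂)
    (by fun_prop) hdom).trans_eq ?_
  rw [expRpowTailMajorant, rpow_neg h₁.le]
  ring

end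
end
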